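/- arXiv:1306.2516 — 2 statements merged into one kernel-verified Lean document; each statement's English description precedes it below -/
import Mathlib

section
/- Let f : ℝ^N → ℝ be convex, continuous, bounded below by 0, and suppose the minimum of f is attained. Then the pair of points realizing the minimum distance between C_f = {(w,y) : y ≥ f(w)} and C_s = {(w,y) : y ≤ 0} is of the form ((w*, f(w*)), (w*, 0)) where w* minimizes f. -/
/-- If `f` is convex, continuous, nonnegative and attains its minimum, then the minimum
distance between the epigraph `C_f` and `C_s = {(w,y) : y ≤ 0}` is realized by a pair of
the form `((w*, f w*), (w*, 0))` with `w*` a minimizer of `f`. -/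
theorem dist_realized_by_minimizer (N : ℕ) (f : EuclideanSpace ℝ (Fin N) → ℝ)
    (hconv : ConvexOn ℝ Set.univ f) (hcont : Continuous f)
    (hpos : ∀ w, 0 ≤ f w) (hattain : ∃ w, ∀ w', f w ≤ f w') :
    let Cf : Set (WithLp 2 (EuclideanSpace ℝ (Fin N) × ℝ)) :=
      {q | f (WithLp.equiv 2 _ q).1 ≤ (WithLp.equiv 2 _ q).2}
    let Cs : Set (WithLp 2 (EuclideanSpace ℝ (Fin N) × ℝ)) :=
      {q | (WithLp.equiv 2 _ q).2 ≤ 0}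
    ∃ u ∈ Cf, ∃ v ∈ Cs, ∃ wstar : EuclideanSpace ℝ (Fin N),
      (∀ w, f wstar ≤ f w) ∧
      u = (WithLp.equiv 2 _).symm (wstar, f wstar) ∧
      v = (WithLp.equiv 2 _).symm (wstar, 0) ∧
      ‖u - v‖ = sInf {d : ℝ | ∃ a ∈ Cf, ∃ b ∈ Cs, d = ‖a - b‖} := by
  intro Cf Cs
  obtain ⟨w, hw⟩ := hattain
  set u : WithLp 2 (EuclideanSpace ℝ (Fin N) × ℝ) := (WithLp.equiv 2 _).symm (w, f w)
  set v : WithLp 2 (EuclideanSpace ℝ (Fin N) × ℝ) := (WithLp.equiv 2 _).symm (w, 0)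
  have huv : ‖u - v‖ = f w := by
    have : (u - v : WithLp 2 (EuclideanSpace ℝ (Fin N) × ℝ)).fst = 0 ∧
        (u - v : WithLp 2 (EuclideanSpace ℝ (Fin N) × ℝ)).snd = f w := by
      constructor <;> simp [u, v]
    rw [WithLp.prod_norm_eq_of_L2, this.1, this.2]
    simp [abs_of_nonneg (hpos w), Real.sqrt_sq (hpos w)]
  have hsnd : ∀ a b : WithLp 2 (EuclideanSpace ℝ (Fin N) × ℝ),
      a.snd - b.snd ≤ ‖a - b‖ := by
    intro a b
    have hsq := WithLp.prod_norm_sq_eq_of_L2 (a - b)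
    rw [Real.norm_eq_abs, sq_abs] at hsq
    have hle : ((a - b : WithLp 2 (EuclideanSpace ℝ (Fin N) × ℝ)).snd) ^ 2 ≤ ‖a - b‖ ^ 2 := by
      rw [hsq]; nlinarith [sq_nonneg ‖(a - b : WithLp 2 (EuclideanSpace ℝ (Fin N) × ℝ)).fst‖]
    have h1 : |((a - b : WithLp 2 (EuclideanSpace ℝ (Fin N) × ℝ)).snd)| ≤ ‖a - b‖ := by
      rw [← Real.sqrt_sq_eq_abs, ← Real.sqrt_sq (norm_nonneg (a - b))]
      exact Real.sqrt_le_sqrt hle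
    have h2 : (a - b : WithLp 2 (EuclideanSpace ℝ (Fin N) × ℝ)).snd = a.snd - b.snd := rfl
    calc a.snd - b.snd ≤ |a.snd - b.snd| := le_abs_self _
      _ ≤ ‖a - b‖ := by rw [← h2]; exact h1
  refine ⟨u, ?_, v, ?_, w, hw, rfl, rfl, ?_⟩
  · simp [Cf, u]
  · simp [Cs, v]
  · rw [huv]
    refine le_antisymm ?_ ?_
    · have hne : {d : ℝ | ∃ a ∈ Cf, ∃ b ∈ Cs, d = ‖a - b‖}.Nonempty :=
        ⟨f w, u, by simp [Cf, u], v, by simp [Cs, v], huv.symm⟩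
      apply le_csInf hne
      rintro d ⟨a, ha, b, hb, rfl⟩
      have h1 : f w ≤ a.snd := le_trans (hw _) ha
      have h2 : b.snd ≤ 0 := hb
      calc f w ≤ a.snd - b.snd := by linarith
        _ ≤ ‖a - b‖ := hsnd a b
    · apply csInf_le
      · refine ⟨0, ?_⟩
        rintro d ⟨a, _, b, _, rfl⟩
        exact norm_nonneg _
      · exact ⟨u, by simp [Cf, u], v, by simp [Cs, v], huv.symm⟩
end

section
/- Let f : ℝ^N → ℝ be convex and differentiable with a global minimizer w*. Then for the lifted sets C_f (epigraph) and C_s = {(w,y) : y ≤ 0} with f ≥ 0, the point (w*, f(w*)) satisfies: the projection of (w*, 0) onto C_f is (w*, f(w*)) and the projection of (w*, f(w*)) onto C_s is (w*, 0). -/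
/-- For convex differentiable `f ≥ 0` with global minimizer `w*`: the projection of
`(w*, 0)` onto the epigraph `C_f` is `(w*, f w*)`, and the projection of `(w*, f w*)`
onto `C_s = {(w,y) : y ≤ 0}` is `(w*, 0)`. -/
theorem minimizer_projection_pair (N : ℕ) (f : EuclideanSpace ℝ (Fin N) → ℝ)
    (f' : EuclideanSpace ℝ (Fin N) → EuclideanSpace ℝ (Fin N))
    (hconv : ConvexOn ℝ Set.univ f)
    (hdiff : ∀ x, HasGradientAt f (f' x) x)
    (hpos : ∀ w, 0 ≤ f w)
    (wstar : EuclideanSpace ℝ (Fin N)) (hmin : ∀ w, f wstar ≤ f w) :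
    let Cf : Set (WithLp 2 (EuclideanSpace ℝ (Fin N) × ℝ)) :=
      {q | f (WithLp.equiv 2 _ q).1 ≤ (WithLp.equiv 2 _ q).2}
    let Cs : Set (WithLp 2 (EuclideanSpace ℝ (Fin N) × ℝ)) :=
      {q | (WithLp.equiv 2 _ q).2 ≤ 0}
    let a : WithLp 2 (EuclideanSpace ℝ (Fin N) × ℝ) :=
      (WithLp.equiv 2 _).symm (wstar, f wstar)
    let b : WithLp 2 (EuclideanSpace ℝ (Fin N) × ℝ) :=
      (WithLp.equiv 2 _).symm (wstar, 0)
    (a ∈ Cf ∧ ∀ u ∈ Cf, ‖b - a‖ ≤ ‖b - u‖) ∧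
    (b ∈ Cs ∧ ∀ u ∈ Cs, ‖a - b‖ ≤ ‖a - u‖) := by
  intro Cf Cs a b
  have hstar : 0 ≤ f wstar := hpos wstar
  have hnorm_le : ∀ x y : WithLp 2 (EuclideanSpace ℝ (Fin N) × ℝ),
      ‖x‖ ^ 2 ≤ ‖y‖ ^ 2 → ‖x‖ ≤ ‖y‖ := by
    intro x y h
    nlinarith [norm_nonneg x, norm_nonneg y]
  refine ⟨⟨show f wstar ≤ f wstar from le_rfl, ?_⟩,
    ⟨show (0:ℝ) ≤ 0 from le_rfl, ?_⟩⟩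
  · intro u hu
    apply hnorm_le
    rw [WithLp.prod_norm_sq_eq_of_L2, WithLp.prod_norm_sq_eq_of_L2]
    have hba1 : (b - a).fst = 0 := by
      show wstar - wstar = 0
      simp
    have hba2 : (b - a).snd = -(f wstar) := by
      show (0 : ℝ) - f wstar = -(f wstar)
      ring
    have hbu1 : (b - u).fst = wstar - u.fst := rfl
    have hbu2 : (b - u).snd = 0 - u.snd := rfl
    rw [hba1, hba2, hbu1, hbu2]
    have hu2 : f u.fst ≤ u.snd := hu
    have : f wstar ≤ u.snd := le_trans (hmin u.fst) hu2
    have h2 : (f wstar) ^ 2 ≤ u.snd ^ 2 := by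
      apply sq_le_sq' <;> nlinarith
    simp only [norm_zero, norm_neg, Real.norm_eq_abs]
    nlinarith [sq_abs (f wstar), sq_abs (0 - u.snd), sq_nonneg (‖wstar - u.fst‖)]
  · intro u hu
    apply hnorm_le
    rw [WithLp.prod_norm_sq_eq_of_L2, WithLp.prod_norm_sq_eq_of_L2]
    have hab1 : (a - b).fst = 0 := by
      show wstar - wstar = 0
      simp
    have hab2 : (a - b).snd = f wstar := by
      show f wstar - 0 = f wstar
      ring
    have hau1 : (a - u).fst = wstar - u.fst := rfl
    have hau2 : (a - u).snd = f wstar - u.snd := rfl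
    rw [hab1, hab2, hau1, hau2]
    have hu2 : u.snd ≤ 0 := hu
    have h2 : (f wstar) ^ 2 ≤ (f wstar - u.snd) ^ 2 := by nlinarith
    simp only [norm_zero, Real.norm_eq_abs]
    nlinarith [sq_abs (f wstar), sq_abs (f wstar - u.snd), sq_nonneg (‖wstar - u.fst‖)]
end
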